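/- Let d, N ≥ 1, C_φ ∈ (0,4), C_{φ'} > 0, and let φ : ℝ → ℝ be differentiable with |φ| ≤ C_φ and |φ'| ≤ C_{φ'}. Fix A ∈ ℝ^{N×d}, W ∈ ℝ^{N×N}, and indices i, j, k with i, k ∈ {1,…,N}. For (x, s, s̃^A, s̃^W) with x ∈ ℝ^d, s ∈ ℝ^N, s̃^A = (s̃^{A^{ij},ℓ}) ∈ ℝ^{N×(Nd)}, s̃^W = (s̃^{W^{ij},ℓ}) ∈ ℝ^{N×N²}, define F_{A^{ij},k}(x,s,s̃) = σ'((1/d)∑_ℓ φ(A^{kℓ})x^ℓ + (1/N)∑_ℓ φ(W^{kℓ})s^ℓ)·((δ_{ik}/d)φ'(A^{ij})x^j + (1/N)∑_ℓ φ(W^{kℓ})s̃^{A^{ij},ℓ}) and F_{W^{ij},k}(x,s,s̃) = σ'((1/d)∑_ℓ φ(A^{kℓ})x^ℓ + (1/N)∑_ℓ φ(W^{kℓ})s^ℓ)·((δ_{ik}/N)φ'(W^{ij})s^j + (1/N)∑_ℓ φ(W^{kℓ})s̃^{W^{ij},ℓ}). Suppose (x,s,s̃) and (x',s',s̃') satisfy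 ‖x‖_max, ‖x'‖_max ≤ 1, s, s' ∈ [0,1]^N, all entries of s̃^A, (s̃')^A bounded in absolute value by C_{φ'}/((4−C_φ)d), and all entries of s̃^W, (s̃')^W bounded by C_{φ'}/((4−C_φ)N). Then both |F_{A^{ij},k}(x,s,s̃) − F_{A^{ij},k}(x',s',s̃')| and |F_{W^{ij},k}(x,s,s̃) − F_{W^{ij},k}(x',s',s̃')| are at most L_0 · max(‖x−x'‖_max, ‖s−s'‖_max, ‖s̃−s̃'‖_max), where L_0 = max( (3C_{φ'}/min(N,d))·(C_φ M_φ/10 + 1/4), 3C_φ/4 ) and M_φ = 1 + C_φ/(4−C_φ). -/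

import Mathlib

open Finset

noncomputable def sigmoid (y : ℝ) : ℝ := 1 / (1 + Real.exp (-y))

lemma sigmoid_pos (y : ℝ) : 0 < sigmoid y := by unfold sigmoid; positivity
lemma sigmoid_lt_one (y : ℝ) : sigmoid y < 1 := by
  unfold sigmoid
  rw [div_lt_one (by positivity)]
  nlinarith [Real.exp_pos (-y)]

lemma sigmoid_hasDerivAt (y : ℝ) :
    HasDerivAt sigmoid (sigmoid y * (1 - sigmoid y)) y := by
  have h1 : HasDerivAt (fun z : ℝ => 1 + Real.exp (-z)) (-Real.exp (-y)) y := by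
    simpa using (Real.hasDerivAt_exp (-y)).comp y (hasDerivAt_neg y) |>.const_add 1
  have hne : (1 : ℝ) + Real.exp (-y) ≠ 0 := by positivity
  have h2 := h1.inv hne
  have heq : sigmoid = fun z : ℝ => ((1 : ℝ) + Real.exp (-z))⁻¹ := by
    funext z; simp [sigmoid, one_div]
  rw [heq]
  refine h2.congr_deriv ?_
  beta_reduce
  have : Real.exp (-y) > 0 := Real.exp_pos _
  field_simp [sigmoid]
  ring

lemma deriv_sigmoid (y : ℝ) : deriv sigmoid y = sigmoid y * (1 - sigmoid y) :=
  (sigmoid_hasDerivAt y).deriv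

lemma deriv_sigmoid_bound (y : ℝ) : |deriv sigmoid y| ≤ 1/4 := by
  rw [deriv_sigmoid]
  have h1 := sigmoid_pos y
  have h2 := sigmoid_lt_one y
  rw [abs_le]
  constructor <;> nlinarith [sq_nonneg (sigmoid y - 1/2)]

lemma deriv_sigmoid_hasDerivAt (y : ℝ) :
    HasDerivAt (deriv sigmoid)
      (sigmoid y * (1 - sigmoid y) * (1 - 2 * sigmoid y)) y := by
  have heq : deriv sigmoid = fun z => sigmoid z * (1 - sigmoid z) := by
    funext z; exact deriv_sigmoid z
  rw [heq]
  have h := (sigmoid_hasDerivAt y).mul ((hasDerivAt_const y (1:ℝ)).sub (sigmoid_hasDerivAt y))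
  refine h.congr_deriv ?_
  simp only [Pi.sub_apply]
  ring

lemma deriv_sigmoid_lipschitz (u u' : ℝ) :
    |deriv sigmoid u - deriv sigmoid u'| ≤ (1/10) * |u - u'| := by
  have key : ∀ y : ℝ, ‖sigmoid y * (1 - sigmoid y) * (1 - 2 * sigmoid y)‖ ≤ 1/10 := by
    intro y
    have h1 := sigmoid_pos y
    have h2 := sigmoid_lt_one y
    set t := sigmoid y
    rw [Real.norm_eq_abs, abs_le]
    constructor <;> nlinarith [mul_nonneg (mul_nonneg h1.le (by linarith : (0:ℝ) ≤ 1 - t)) (sq_nonneg (t*(1-t) - 1/6)), sq_nonneg (t*(1-t) - 1/6), sq_nonneg (1 - 2*t), mul_nonneg h1.le (by linarith : (0:ℝ) ≤ 1 - t)]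
  have := Convex.norm_image_sub_le_of_norm_hasDerivWithin_le
    (f := deriv sigmoid) (f' := fun y => sigmoid y * (1 - sigmoid y) * (1 - 2 * sigmoid y))
    (fun y _ => (deriv_sigmoid_hasDerivAt y).hasDerivWithinAt)
    (fun y _ => key y) convex_univ (Set.mem_univ u') (Set.mem_univ u)
  simpa [Real.norm_eq_abs] using this

lemma core (Cφ Cφ' Mφ L0 μ m E u u' g g' : ℝ)
    (hCφ0 : 0 < Cφ) (hCφ' : 0 < Cφ')
    (hμ : 1 ≤ μ) (hμm : μ ≤ m)
    (hMφ : 1 ≤ Mφ)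
    (hL0 : L0 = max ((3 * Cφ' / μ) * (Cφ * Mφ / 10 + 1 / 4)) (3 * Cφ / 4))
    (hE : 0 ≤ E)
    (huu : |u - u'| ≤ 2 * Cφ * E)
    (hg : |g| ≤ Cφ' * Mφ / m)
    (hgg : |g - g'| ≤ (Cφ' / m + Cφ) * E) :
    |deriv sigmoid u * g - deriv sigmoid u' * g'| ≤ L0 * E := by
  have hm : (0:ℝ) < m := by linarith
  have hσ2 := deriv_sigmoid_bound u'
  have hlip := deriv_sigmoid_lipschitz u u'
  have habs : |u - u'| ≥ 0 := abs_nonneg _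
  have hgnn : |g| ≥ 0 := abs_nonneg _
  have step : |deriv sigmoid u * g - deriv sigmoid u' * g'|
      ≤ |deriv sigmoid u - deriv sigmoid u'| * |g| + |deriv sigmoid u'| * |g - g'| := by
    have : deriv sigmoid u * g - deriv sigmoid u' * g'
        = (deriv sigmoid u - deriv sigmoid u') * g + deriv sigmoid u' * (g - g') := by ring
    rw [this]
    calc _ ≤ |(deriv sigmoid u - deriv sigmoid u') * g| + |deriv sigmoid u' * (g - g')| :=
          abs_add_le _ _
      _ = _ := by rw [abs_mul, abs_mul]
  have h1 : |deriv sigmoid u - deriv sigmoid u'| * |g|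
      ≤ (1/10) * (2 * Cφ * E) * (Cφ' * Mφ / m) := by
    apply mul_le_mul (le_trans hlip (by nlinarith)) hg hgnn (by positivity)
  have h2 : |deriv sigmoid u'| * |g - g'| ≤ (1/4) * ((Cφ' / m + Cφ) * E) := by
    apply mul_le_mul hσ2 hgg (abs_nonneg _) (by norm_num)
  have hL1 : (3 * Cφ' / m) * (Cφ * Mφ / 10 + 1 / 4) ≤ L0 := by
    rw [hL0]
    refine le_trans ?_ (le_max_left _ _)
    have hpos : (0:ℝ) ≤ Cφ * Mφ / 10 + 1 / 4 := by positivity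
    apply mul_le_mul_of_nonneg_right _ hpos
    apply div_le_div_of_nonneg_left (by linarith) (by linarith) hμm
  have hL2 : 3 * Cφ / 4 ≤ L0 := hL0 ▸ le_max_right _ _
  have hfin : (1/10) * (2 * Cφ * E) * (Cφ' * Mφ / m) + (1/4) * ((Cφ' / m + Cφ) * E) ≤ L0 * E := by
    have hP : (0:ℝ) < Cφ' / m := by positivity
    have key : (1/10) * (2 * Cφ) * (Cφ' * Mφ / m) + (1/4) * (Cφ' / m + Cφ) ≤ L0 := by
      have e1 : Cφ' * Mφ / m = (Cφ' / m) * Mφ := by ring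
      have e2 : 3 * Cφ' / m = 3 * (Cφ' / m) := by ring
      rw [e1]
      rw [e2] at hL1
      nlinarith [mul_pos hP (mul_pos hCφ0 (by linarith : (0:ℝ) < Mφ))]
    nlinarith [mul_le_mul_of_nonneg_right key hE]
  calc |deriv sigmoid u * g - deriv sigmoid u' * g'| ≤ _ := step
    _ ≤ _ := add_le_add h1 h2
    _ ≤ L0 * E := hfin

lemma avg_bound {n : ℕ} (hn : 1 ≤ n) (c B : ℝ) (hc : 0 ≤ c) (hB : 0 ≤ B)
    (w v : Fin n → ℝ) (hw : ∀ ℓ, |w ℓ| ≤ c) (hv : ∀ ℓ, |v ℓ| ≤ B) :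
    |(1 / (n:ℝ)) * ∑ ℓ, w ℓ * v ℓ| ≤ c * B := by
  have hn' : (0:ℝ) < n := by exact_mod_cast hn
  rw [abs_mul]
  have h1 : |∑ ℓ, w ℓ * v ℓ| ≤ (n:ℝ) * (c * B) := by
    calc |∑ ℓ, w ℓ * v ℓ| ≤ ∑ ℓ, |w ℓ * v ℓ| := Finset.abs_sum_le_sum_abs _ _
      _ ≤ ∑ _ℓ : Fin n, c * B := Finset.sum_le_sum (fun ℓ _ => by
          rw [abs_mul]; exact mul_le_mul (hw ℓ) (hv ℓ) (abs_nonneg _) hc)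
      _ = (n:ℝ) * (c * B) := by simp [mul_comm]
  have : |1 / (n:ℝ)| = 1 / (n:ℝ) := abs_of_pos (by positivity)
  rw [this]
  calc 1 / (n:ℝ) * |∑ ℓ, w ℓ * v ℓ| ≤ 1 / (n:ℝ) * ((n:ℝ) * (c * B)) := by
        apply mul_le_mul_of_nonneg_left h1 (by positivity)
    _ = c * B := by field_simp


lemma side (Cφ Cφ' Mφ L0 μ E u u' δ p a a' E1 E2 : ℝ) {m N : ℕ} (hm : 1 ≤ m) (hN : 1 ≤ N)
    (w t t' : Fin N → ℝ)
    (hCφ0 : 0 < Cφ) (hCφ4 : Cφ < 4) (hCφ' : 0 < Cφ')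
    (hμ : 1 ≤ μ) (hμm : μ ≤ (m:ℝ))
    (hMφ : Mφ = 1 + Cφ / (4 - Cφ))
    (hL0 : L0 = max ((3 * Cφ' / μ) * (Cφ * Mφ / 10 + 1 / 4)) (3 * Cφ / 4))
    (hE : 0 ≤ E) (hE1 : 0 ≤ E1) (hE2 : 0 ≤ E2) (hE1' : E1 ≤ E) (hE2' : E2 ≤ E)
    (huu : |u - u'| ≤ 2 * Cφ * E)
    (hδ : |δ| ≤ 1) (hp : |p| ≤ Cφ') (ha : |a| ≤ 1) (ha' : |a'| ≤ 1)
    (haa : |a - a'| ≤ E1)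
    (hw : ∀ ℓ, |w ℓ| ≤ Cφ)
    (ht : ∀ ℓ, |t ℓ| ≤ Cφ' / ((4 - Cφ) * m))
    (ht' : ∀ ℓ, |t' ℓ| ≤ Cφ' / ((4 - Cφ) * m))
    (htt : ∀ ℓ, |t ℓ - t' ℓ| ≤ E2) :
    |deriv sigmoid u * (δ / (m:ℝ) * p * a + (1 / (N:ℝ)) * ∑ ℓ, w ℓ * t ℓ)
      - deriv sigmoid u' * (δ / (m:ℝ) * p * a' + (1 / (N:ℝ)) * ∑ ℓ, w ℓ * t' ℓ)| ≤ L0 * E := by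
  have hm' : (0:ℝ) < m := by exact_mod_cast hm
  have h4 : (0:ℝ) < 4 - Cφ := by linarith
  have hMφ1 : 1 ≤ Mφ := by
    have h0 : 0 ≤ Cφ / (4 - Cφ) := by positivity
    rw [hMφ]; linarith
  have hδterm : ∀ b : ℝ, |b| ≤ 1 → |δ / (m:ℝ) * p * b| ≤ Cφ' / m := by
    intro b hb
    rw [abs_mul, abs_mul, abs_div]
    rw [abs_of_pos hm']
    calc |δ| / (m:ℝ) * |p| * |b| ≤ 1 / (m:ℝ) * Cφ' * 1 := by
          apply mul_le_mul _ hb (abs_nonneg _) (by positivity)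
          exact mul_le_mul (div_le_div_of_nonneg_right hδ hm'.le) hp (abs_nonneg _) (by positivity)
      _ = Cφ' / m := by ring
  apply core Cφ Cφ' Mφ L0 μ m E u u' _ _ hCφ0 hCφ' hμ hμm hMφ1 hL0 hE huu
  · -- |g| ≤ Cφ' * Mφ / m
    calc |δ / (m:ℝ) * p * a + (1 / (N:ℝ)) * ∑ ℓ, w ℓ * t ℓ|
        ≤ |δ / (m:ℝ) * p * a| + |(1 / (N:ℝ)) * ∑ ℓ, w ℓ * t ℓ| := abs_add_le _ _
      _ ≤ Cφ' / m + Cφ * (Cφ' / ((4 - Cφ) * m)) := by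
          refine add_le_add (hδterm a ha) (avg_bound hN Cφ _ hCφ0.le (by positivity) w t hw ht)
      _ = Cφ' * Mφ / m := by rw [hMφ]; field_simp
  · -- |g - g'| ≤ (Cφ'/m + Cφ) * E
    have hdiff : (δ / (m:ℝ) * p * a + (1 / (N:ℝ)) * ∑ ℓ, w ℓ * t ℓ)
        - (δ / (m:ℝ) * p * a' + (1 / (N:ℝ)) * ∑ ℓ, w ℓ * t' ℓ)
        = δ / (m:ℝ) * p * (a - a') + (1 / (N:ℝ)) * ∑ ℓ, w ℓ * (t ℓ - t' ℓ) := by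
      simp only [mul_sub, Finset.sum_sub_distrib]; ring
    rw [hdiff]
    calc |δ / (m:ℝ) * p * (a - a') + (1 / (N:ℝ)) * ∑ ℓ, w ℓ * (t ℓ - t' ℓ)|
        ≤ |δ / (m:ℝ) * p * (a - a')| + |(1 / (N:ℝ)) * ∑ ℓ, w ℓ * (t ℓ - t' ℓ)| := abs_add_le _ _
      _ ≤ Cφ' / m * E1 + Cφ * E2 := by
          refine add_le_add ?_ (avg_bound hN Cφ E2 hCφ0.le hE2 w _ hw htt)
          rw [abs_mul, abs_mul, abs_div, abs_of_pos hm']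
          calc |δ| / (m:ℝ) * |p| * |a - a'| ≤ 1 / (m:ℝ) * Cφ' * E1 := by
                apply mul_le_mul _ haa (abs_nonneg _) (by positivity)
                exact mul_le_mul (div_le_div_of_nonneg_right hδ hm'.le) hp (abs_nonneg _) (by positivity)
            _ = Cφ' / m * E1 := by ring
      _ ≤ Cφ' / m * E + Cφ * E := by
          refine add_le_add (mul_le_mul_of_nonneg_left hE1' (by positivity))
            (mul_le_mul_of_nonneg_left hE2' hCφ0.le)
      _ = (Cφ' / m + Cφ) * E := by ring

theorem first_derivative_maps_lipschitz
    (d N : ℕ) (hd : 1 ≤ d) (hN : 1 ≤ N)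
    (Cφ Cφ' : ℝ) (hCφ0 : 0 < Cφ) (hCφ4 : Cφ < 4) (hCφ' : 0 < Cφ')
    (φ : ℝ → ℝ) (hφdiff : Differentiable ℝ φ)
    (hφ : ∀ y, |φ y| ≤ Cφ) (hφ' : ∀ y, |deriv φ y| ≤ Cφ')
    (A : Fin N → Fin d → ℝ) (W : Fin N → Fin N → ℝ)
    (i k : Fin N) (jA : Fin d) (jW : Fin N)
    (Mφ L0 : ℝ)
    (hMφ : Mφ = 1 + Cφ / (4 - Cφ))
    (hL0 : L0 = max ((3 * Cφ' / min (N : ℝ) (d : ℝ)) * (Cφ * Mφ / 10 + 1 / 4)) (3 * Cφ / 4))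
    (x x' : Fin d → ℝ) (s s' : Fin N → ℝ)
    (tA tA' : Fin N → Fin d → Fin N → ℝ) (tW tW' : Fin N → Fin N → Fin N → ℝ)
    (hx : ‖x‖ ≤ 1) (hx' : ‖x'‖ ≤ 1)
    (hs : ∀ ℓ, s ℓ ∈ Set.Icc (0 : ℝ) 1) (hs' : ∀ ℓ, s' ℓ ∈ Set.Icc (0 : ℝ) 1)
    (htA : ∀ a b ℓ, |tA a b ℓ| ≤ Cφ' / ((4 - Cφ) * d))
    (htA' : ∀ a b ℓ, |tA' a b ℓ| ≤ Cφ' / ((4 - Cφ) * d))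
    (htW : ∀ a b ℓ, |tW a b ℓ| ≤ Cφ' / ((4 - Cφ) * N))
    (htW' : ∀ a b ℓ, |tW' a b ℓ| ≤ Cφ' / ((4 - Cφ) * N)) :
    |deriv sigmoid ((1 / (d : ℝ)) * ∑ ℓ, φ (A k ℓ) * x ℓ
          + (1 / (N : ℝ)) * ∑ ℓ, φ (W k ℓ) * s ℓ)
        * ((if i = k then (1 : ℝ) else 0) / (d : ℝ) * deriv φ (A i jA) * x jA
            + (1 / (N : ℝ)) * ∑ ℓ, φ (W k ℓ) * tA i jA ℓ)
      - deriv sigmoid ((1 / (d : ℝ)) * ∑ ℓ, φ (A k ℓ) * x' ℓ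
          + (1 / (N : ℝ)) * ∑ ℓ, φ (W k ℓ) * s' ℓ)
        * ((if i = k then (1 : ℝ) else 0) / (d : ℝ) * deriv φ (A i jA) * x' jA
            + (1 / (N : ℝ)) * ∑ ℓ, φ (W k ℓ) * tA' i jA ℓ)|
      ≤ L0 * max (max ‖x - x'‖ ‖s - s'‖) (max ‖tA - tA'‖ ‖tW - tW'‖) ∧
    |deriv sigmoid ((1 / (d : ℝ)) * ∑ ℓ, φ (A k ℓ) * x ℓ
          + (1 / (N : ℝ)) * ∑ ℓ, φ (W k ℓ) * s ℓ)
        * ((if i = k then (1 : ℝ) else 0) / (N : ℝ) * deriv φ (W i jW) * s jW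
            + (1 / (N : ℝ)) * ∑ ℓ, φ (W k ℓ) * tW i jW ℓ)
      - deriv sigmoid ((1 / (d : ℝ)) * ∑ ℓ, φ (A k ℓ) * x' ℓ
          + (1 / (N : ℝ)) * ∑ ℓ, φ (W k ℓ) * s' ℓ)
        * ((if i = k then (1 : ℝ) else 0) / (N : ℝ) * deriv φ (W i jW) * s' jW
            + (1 / (N : ℝ)) * ∑ ℓ, φ (W k ℓ) * tW' i jW ℓ)|
      ≤ L0 * max (max ‖x - x'‖ ‖s - s'‖) (max ‖tA - tA'‖ ‖tW - tW'‖) := by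
  set E := max (max ‖x - x'‖ ‖s - s'‖) (max ‖tA - tA'‖ ‖tW - tW'‖) with hEdef
  have hE : 0 ≤ E := le_trans (norm_nonneg (x - x')) ((le_max_left _ _).trans (le_max_left _ _))
  have hxE : ‖x - x'‖ ≤ E := (le_max_left _ _).trans (le_max_left _ _)
  have hsE : ‖s - s'‖ ≤ E := (le_max_right _ _).trans (le_max_left _ _)
  have htAE : ‖tA - tA'‖ ≤ E := (le_max_left _ _).trans (le_max_right _ _)
  have htWE : ‖tW - tW'‖ ≤ E := (le_max_right _ _).trans (le_max_right _ _)
  have hxc : ∀ ℓ, |x ℓ - x' ℓ| ≤ ‖x - x'‖ := fun ℓ => by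
    simpa using norm_le_pi_norm (x - x') ℓ
  have hsc : ∀ ℓ, |s ℓ - s' ℓ| ≤ ‖s - s'‖ := fun ℓ => by
    simpa using norm_le_pi_norm (s - s') ℓ
  have htAc : ∀ ℓ, |tA i jA ℓ - tA' i jA ℓ| ≤ ‖tA - tA'‖ := fun ℓ => by
    calc |tA i jA ℓ - tA' i jA ℓ| = ‖((tA - tA') i jA) ℓ‖ := by simp [Pi.sub_apply]
      _ ≤ ‖(tA - tA') i jA‖ := norm_le_pi_norm _ ℓ
      _ ≤ ‖(tA - tA') i‖ := norm_le_pi_norm _ jA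
      _ ≤ ‖tA - tA'‖ := norm_le_pi_norm _ i
  have htWc : ∀ ℓ, |tW i jW ℓ - tW' i jW ℓ| ≤ ‖tW - tW'‖ := fun ℓ => by
    calc |tW i jW ℓ - tW' i jW ℓ| = ‖((tW - tW') i jW) ℓ‖ := by simp [Pi.sub_apply]
      _ ≤ ‖(tW - tW') i jW‖ := norm_le_pi_norm _ ℓ
      _ ≤ ‖(tW - tW') i‖ := norm_le_pi_norm _ jW
      _ ≤ ‖tW - tW'‖ := norm_le_pi_norm _ i
  have hxa : |x jA| ≤ 1 := by
    have := norm_le_pi_norm x jA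
    rw [Real.norm_eq_abs] at this; linarith
  have hxa' : |x' jA| ≤ 1 := by
    have := norm_le_pi_norm x' jA
    rw [Real.norm_eq_abs] at this; linarith
  have hsa : |s jW| ≤ 1 := abs_le.mpr ⟨by linarith [(hs jW).1], (hs jW).2⟩
  have hsa' : |s' jW| ≤ 1 := abs_le.mpr ⟨by linarith [(hs' jW).1], (hs' jW).2⟩
  have hsb : ∀ ℓ, |s ℓ| ≤ 1 := fun ℓ => abs_le.mpr ⟨by linarith [(hs ℓ).1], (hs ℓ).2⟩
  have hμ : (1:ℝ) ≤ min (N:ℝ) (d:ℝ) :=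
    le_min (by exact_mod_cast hN) (by exact_mod_cast hd)
  have hδ : |(if i = k then (1:ℝ) else 0)| ≤ 1 := by split_ifs <;> norm_num
  -- bound on |u - u'|
  have hudiff :
      ((1 / (d : ℝ)) * ∑ ℓ, φ (A k ℓ) * x ℓ + (1 / (N : ℝ)) * ∑ ℓ, φ (W k ℓ) * s ℓ)
      - ((1 / (d : ℝ)) * ∑ ℓ, φ (A k ℓ) * x' ℓ + (1 / (N : ℝ)) * ∑ ℓ, φ (W k ℓ) * s' ℓ)
      = (1 / (d : ℝ)) * ∑ ℓ, φ (A k ℓ) * (x ℓ - x' ℓ)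
        + (1 / (N : ℝ)) * ∑ ℓ, φ (W k ℓ) * (s ℓ - s' ℓ) := by
    simp only [mul_sub, Finset.sum_sub_distrib]; ring
  have huu : |((1 / (d : ℝ)) * ∑ ℓ, φ (A k ℓ) * x ℓ + (1 / (N : ℝ)) * ∑ ℓ, φ (W k ℓ) * s ℓ)
      - ((1 / (d : ℝ)) * ∑ ℓ, φ (A k ℓ) * x' ℓ + (1 / (N : ℝ)) * ∑ ℓ, φ (W k ℓ) * s' ℓ)|
      ≤ 2 * Cφ * E := by
    rw [hudiff]
    calc _ ≤ |(1 / (d : ℝ)) * ∑ ℓ, φ (A k ℓ) * (x ℓ - x' ℓ)|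
          + |(1 / (N : ℝ)) * ∑ ℓ, φ (W k ℓ) * (s ℓ - s' ℓ)| := abs_add_le _ _
      _ ≤ Cφ * ‖x - x'‖ + Cφ * ‖s - s'‖ := add_le_add
          (avg_bound hd Cφ _ hCφ0.le (norm_nonneg _) _ _ (fun ℓ => hφ _) hxc)
          (avg_bound hN Cφ _ hCφ0.le (norm_nonneg _) _ _ (fun ℓ => hφ _) hsc)
      _ ≤ 2 * Cφ * E := by nlinarith
  constructor
  · exact side Cφ Cφ' Mφ L0 (min (N:ℝ) (d:ℝ)) E _ _ _ (deriv φ (A i jA)) (x jA) (x' jA)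
      ‖x - x'‖ ‖tA - tA'‖ hd hN (fun ℓ => φ (W k ℓ)) (fun ℓ => tA i jA ℓ) (fun ℓ => tA' i jA ℓ)
      hCφ0 hCφ4 hCφ' hμ (min_le_right _ _) hMφ hL0 hE (norm_nonneg _) (norm_nonneg _)
      hxE htAE huu hδ (hφ' _) hxa hxa' (hxc jA) (fun ℓ => hφ _) (fun ℓ => htA i jA ℓ)
      (fun ℓ => htA' i jA ℓ) htAc
  · exact side Cφ Cφ' Mφ L0 (min (N:ℝ) (d:ℝ)) E _ _ _ (deriv φ (W i jW)) (s jW) (s' jW)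
      ‖s - s'‖ ‖tW - tW'‖ hN hN (fun ℓ => φ (W k ℓ)) (fun ℓ => tW i jW ℓ) (fun ℓ => tW' i jW ℓ)
      hCφ0 hCφ4 hCφ' hμ (min_le_left _ _) hMφ hL0 hE (norm_nonneg _) (norm_nonneg _)
      hsE htWE huu hδ (hφ' _) hsa hsa' (hsc jW) (fun ℓ => hφ _) (fun ℓ => htW i jW ℓ)
      (fun ℓ => htW' i jW ℓ) htWc
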